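/- Let k ≥ 0 and let G be a graph. Then there exist l with 0 ≤ l ≤ k and pairwise distinct edges e1, …, e_{2l} ∈ E^G such that the graph G^{×ē}, obtained by successively crossing e1 with e2, e3 with e4, …, e_{2l−1} with e_{2l}, is planar, if and only if G has a drawing with at most k crossings in which every edge is involved in at most one crossing. -/

import Mathlib

lemma sym2_out_eq {α : Type} (s : Sym2 α) : s = s((Quot.out s).1, (Quot.out s).2) := by
  exact (Quot.out_eq s).symm

lemma sym2_out_fst_mem {α : Type} (s : Sym2 α) : (Quot.out s).1 ∈ s := by
  set p := Quot.out s with hp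
  rw [sym2_out_eq s, ← hp]
  exact Sym2.mem_mk_left _ _

lemma sym2_out_snd_mem {α : Type} (s : Sym2 α) : (Quot.out s).2 ∈ s := by
  set p := Quot.out s with hp
  rw [sym2_out_eq s, ← hp]
  exact Sym2.mem_mk_right _ _

lemma sym2_out_ne {α : Type} (s : Sym2 α) (h : ¬ s.IsDiag) : (Quot.out s).1 ≠ (Quot.out s).2 := by
  intro he
  exact h (by rw [sym2_out_eq s]; exact Sym2.mk_isDiag_iff.mpr he)

/-! ### Basic multigraphs -/

/-- A multigraph: undirected, loop-free, possibly with multiple (parallel) edges.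
Each edge is assigned its unordered pair of (distinct) endpoints. -/
structure Multigraph where
  V : Type
  E : Type
  ends : E → Sym2 V
  loopless : ∀ e : E, ¬ (ends e).IsDiag

namespace Multigraph

/-- Walks in a multigraph. -/
inductive Walk (G : Multigraph) : G.V → G.V → Type where
  | nil (v : G.V) : Walk G v v
  | cons {u v w : G.V} (e : G.E) (he : G.ends e = s(u, v)) (p : Walk G v w) : Walk G u w

namespace Walk

variable {G : Multigraph}

/-- The list of vertices visited by a walk (in order, including both endpoints). -/
def support : ∀ {u v : G.V}, G.Walk u v → List G.V
  | u, _, .nil _ => [u]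
  | u, _, .cons _ _ p => u :: p.support

/-- The list of edges traversed by a walk. -/
def edgeList : ∀ {u v : G.V}, G.Walk u v → List G.E
  | _, _, .nil _ => []
  | _, _, .cons e _ p => e :: p.edgeList

lemma start_mem_support : ∀ {u v : G.V} (w : G.Walk u v), u ∈ w.support
  | _, _, .nil _ => List.mem_singleton_self _
  | _, _, .cons _ _ _ => List.mem_cons_self

lemma end_mem_support : ∀ {u v : G.V} (w : G.Walk u v), v ∈ w.support
  | _, _, .nil _ => List.mem_singleton_self _
  | _, _, .cons _ _ p => List.mem_cons_of_mem _ (end_mem_support p)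

lemma mem_support_of_mem_edgeList :
    ∀ {u v : G.V} (w : G.Walk u v) (f : G.E) (x : G.V),
      f ∈ w.edgeList → x ∈ G.ends f → x ∈ w.support
  | _, _, .nil _, f, x, hf, _ => by simp [edgeList] at hf
  | u, v, .cons e he p, f, x, hf, hx => by
      rcases List.mem_cons.mp hf with h | h
      · subst h
        rw [he, Sym2.mem_iff] at hx
        rcases hx with rfl | rfl
        · exact start_mem_support _
        · exact List.mem_cons_of_mem _ (start_mem_support p)
      · exact List.mem_cons_of_mem _ (mem_support_of_mem_edgeList p f x h hx)

/-- A walk is a path if it visits no vertex twice. -/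
def IsPath {u v : G.V} (w : G.Walk u v) : Prop := w.support.Nodup

/-- A closed walk is a cycle if it is nontrivial, repeats no edge,
and repeats no vertex except the first = last one. -/
def IsCycleW {u : G.V} (w : G.Walk u u) : Prop :=
  w.edgeList ≠ [] ∧ w.edgeList.Nodup ∧ w.support.tail.Nodup

end Walk

/-! ### Subgraphs -/

/-- A subgraph of `G`, given by a set of vertices and a set of edges all of whose
endpoints belong to the vertex set. -/
structure Subgraph (G : Multigraph) where
  verts : Set G.V
  edges : Set G.E
  closed : ∀ e ∈ edges, ∀ v ∈ G.ends e, v ∈ verts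

namespace Subgraph

variable {G : Multigraph}

/-- The subgraph consisting of all of `G`. -/
def top (G : Multigraph) : G.Subgraph where
  verts := Set.univ
  edges := Set.univ
  closed := fun _ _ _ _ => Set.mem_univ _

/-- Union of two subgraphs. -/
def union (A B : G.Subgraph) : G.Subgraph where
  verts := A.verts ∪ B.verts
  edges := A.edges ∪ B.edges
  closed := by
    rintro e (he | he) v hv
    · exact Or.inl (A.closed e he v hv)
    · exact Or.inr (B.closed e he v hv)

/-- Union of a set of subgraphs. -/
def sUnion (𝒮 : Set G.Subgraph) : G.Subgraph where
  verts := ⋃ S ∈ 𝒮, S.verts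
  edges := ⋃ S ∈ 𝒮, S.edges
  closed := by
    intro e he v hv
    simp only [Set.mem_iUnion] at he ⊢
    obtain ⟨S, hS, heS⟩ := he
    exact ⟨S, hS, S.closed e heS v hv⟩

/-- Delete a set of vertices (and all edges touching them) from a subgraph. -/
def delete (S : G.Subgraph) (A : Set G.V) : G.Subgraph where
  verts := S.verts \ A
  edges := {e ∈ S.edges | ∀ v ∈ G.ends e, v ∉ A}
  closed := fun e he v hv => ⟨S.closed e he.1 v hv, he.2 v hv⟩

/-- The subgraph, viewed as a graph in its own right. -/
def toGraph (S : G.Subgraph) : Multigraph where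
  V := {v : G.V // v ∈ S.verts}
  E := {e : G.E // e ∈ S.edges}
  ends := fun e => (G.ends e.val).attachWith (fun v hv => S.closed e.val e.2 v hv)
  loopless := by
    intro e he
    have h2 := Sym2.IsDiag.map (f := Subtype.val) he
    rw [Sym2.attachWith_map_subtypeVal] at h2
    exact G.loopless e.val h2

lemma toGraph_ends {S : G.Subgraph} (e : S.toGraph.E) {v w : G.V}
    (hvw : G.ends e.val = s(v, w)) (hv : v ∈ S.verts) (hw : w ∈ S.verts) :
    S.toGraph.ends e = s((⟨v, hv⟩ : {v : G.V // v ∈ S.verts}), ⟨w, hw⟩) := by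
  apply Sym2.map.injective Subtype.val_injective
  show Sym2.map Subtype.val ((G.ends e.val).attachWith _) = _
  rw [Sym2.attachWith_map_subtypeVal, Sym2.map_pair_eq, hvw]

lemma toGraph_mem_ends {S : G.Subgraph} (e : S.toGraph.E) (x : S.toGraph.V) :
    x ∈ S.toGraph.ends e ↔ x.val ∈ G.ends e.val := by
  constructor
  · intro hx
    have h2 : x.val ∈ Sym2.map Subtype.val (S.toGraph.ends e) :=
      Sym2.mem_map.mpr ⟨x, hx, rfl⟩
    rwa [show Sym2.map Subtype.val (S.toGraph.ends e) = G.ends e.val from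
      Sym2.attachWith_map_subtypeVal _] at h2
  · intro hx
    have h2 : x.val ∈ Sym2.map Subtype.val (S.toGraph.ends e) := by
      rwa [show Sym2.map Subtype.val (S.toGraph.ends e) = G.ends e.val from
        Sym2.attachWith_map_subtypeVal _]
    obtain ⟨y, hy, hyx⟩ := Sym2.mem_map.mp h2
    rwa [show y = x from Subtype.ext hyx] at hy

/-- Reachability within a subgraph: a walk of `G` all of whose vertices and
edges belong to the subgraph. -/
def Reach (S : G.Subgraph) (u v : G.V) : Prop :=
  ∃ w : G.Walk u v, (∀ x ∈ w.support, x ∈ S.verts) ∧ ∀ e ∈ w.edgeList, e ∈ S.edges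

/-- A subgraph is connected if it is nonempty and any two of its vertices are
joined by a walk inside it. -/
def Connected (S : G.Subgraph) : Prop :=
  S.verts.Nonempty ∧ ∀ u ∈ S.verts, ∀ v ∈ S.verts, S.Reach u v

end Subgraph

/-- The induced subgraph on a vertex set `A`. -/
def induce (G : Multigraph) (A : Set G.V) : G.Subgraph where
  verts := A
  edges := {e | ∀ v ∈ G.ends e, v ∈ A}
  closed := fun _ he v hv => he v hv

/-- `G ∖ A`: delete the vertices in `A`, keeping only edges with no endpoint in `A`. -/
def deleteVerts (G : Multigraph) (A : Set G.V) : G.Subgraph :=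
  G.induce Aᶜ

end Multigraph
/-! ### Drawings in the plane -/

/-- A drawing of a graph in the plane.  Every vertex is assigned a point and every
edge a simple curve (given by an injective continuous parametrization on `[0,1]`)
joining the images of its endpoints; distinct vertices get distinct points;
distinct edge curves meet in at most one interior point; no curve passes through the
image of a vertex other than its endpoints; and no point which is not the image of a
vertex lies on more than two edge curves. -/
structure Drawing (G : Multigraph) where
  vpos : G.V → ℝ × ℝ
  par : G.E → ℝ → ℝ × ℝ
  par_cont : ∀ e, ContinuousOn (par e) (Set.Icc 0 1)
  par_inj : ∀ e, Set.InjOn (par e) (Set.Icc 0 1)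
  ends_match : ∀ e, ∃ v w : G.V, G.ends e = s(v, w) ∧ par e 0 = vpos v ∧ par e 1 = vpos w
  vpos_inj : Function.Injective vpos
  arcs_inter : ∀ e f : G.E, e ≠ f →
    Set.Subsingleton (par e '' Set.Ioo 0 1 ∩ par f '' Set.Ioo 0 1)
  vertex_on_arc : ∀ (e : G.E) (v : G.V), vpos v ∈ par e '' Set.Icc 0 1 → v ∈ G.ends e
  at_most_two : ∀ x : ℝ × ℝ, x ∉ Set.range vpos →
    ∀ e₁ e₂ e₃ : G.E, x ∈ par e₁ '' Set.Icc 0 1 → x ∈ par e₂ '' Set.Icc 0 1 →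
      x ∈ par e₃ '' Set.Icc 0 1 → e₁ = e₂ ∨ e₁ = e₃ ∨ e₂ = e₃

namespace Drawing

variable {G : Multigraph}

/-- The curve drawn for the edge `e`. -/
def arc (Δ : Drawing G) (e : G.E) : Set (ℝ × ℝ) := Δ.par e '' Set.Icc 0 1

/-- A crossing of a drawing: a point which is not the image of a vertex and lies on
two distinct edge curves. -/
def IsCrossing (Δ : Drawing G) (x : ℝ × ℝ) : Prop :=
  x ∉ Set.range Δ.vpos ∧ ∃ e f : G.E, e ≠ f ∧ x ∈ Δ.arc e ∧ x ∈ Δ.arc f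

/-- The set of crossings of a drawing. -/
def crossings (Δ : Drawing G) : Set (ℝ × ℝ) := {x | Δ.IsCrossing x}

/-- The drawing has at most `k` crossings. -/
def CrossingsAtMost (Δ : Drawing G) (k : ℕ) : Prop :=
  Δ.crossings.Finite ∧ Δ.crossings.ncard ≤ k

/-- The edge `e` is involved in some crossing of the drawing. -/
def Involved (Δ : Drawing G) (e : G.E) : Prop :=
  ∃ x : ℝ × ℝ, Δ.IsCrossing x ∧ x ∈ Δ.arc e

/-- An `l`-good drawing with respect to a set `F` of forbidden edges:
at most `l` crossings, and no forbidden edge is involved in any crossing. -/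
def IsGood (Δ : Drawing G) (l : ℕ) (F : Set G.E) : Prop :=
  Δ.CrossingsAtMost l ∧ ∀ e ∈ F, ¬ Δ.Involved e

/-- The image of a subgraph under a drawing: all vertex points and edge curves of
the subgraph. -/
def subImage (Δ : Drawing G) (S : G.Subgraph) : Set (ℝ × ℝ) :=
  Δ.vpos '' S.verts ∪ ⋃ e ∈ S.edges, Δ.arc e

/-- The restriction of a drawing to a subgraph. -/
def restrict (Δ : Drawing G) (S : G.Subgraph) : Drawing S.toGraph where
  vpos := fun v => Δ.vpos v.val
  par := fun e => Δ.par e.val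
  par_cont := fun e => Δ.par_cont e.val
  par_inj := fun e => Δ.par_inj e.val
  ends_match := by
    intro e
    obtain ⟨v, w, hvw, h0, h1⟩ := Δ.ends_match e.val
    have hv : v ∈ S.verts := S.closed e.val e.2 v (by rw [hvw]; exact Sym2.mem_mk_left _ _)
    have hw : w ∈ S.verts := S.closed e.val e.2 w (by rw [hvw]; exact Sym2.mem_mk_right _ _)
    exact ⟨⟨v, hv⟩, ⟨w, hw⟩, Multigraph.Subgraph.toGraph_ends e hvw hv hw, h0, h1⟩
  vpos_inj := fun v w h => Subtype.ext (Δ.vpos_inj h)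
  arcs_inter := fun e f hef =>
    Δ.arcs_inter e.val f.val (fun h => hef (Subtype.ext h))
  vertex_on_arc := by
    intro e v hv
    exact (Multigraph.Subgraph.toGraph_mem_ends e v).mpr (Δ.vertex_on_arc e.val v.val hv)
  at_most_two := by
    intro x hx e₁ e₂ e₃ h₁ h₂ h₃
    by_cases hxr : x ∈ Set.range Δ.vpos
    · obtain ⟨u, hu⟩ := hxr
      have hu1 : u ∈ G.ends e₁.val := Δ.vertex_on_arc e₁.val u (by rw [hu]; exact h₁)
      have huS : u ∈ S.verts := S.closed e₁.val e₁.2 u hu1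
      exact absurd ⟨⟨u, huS⟩, hu⟩ hx
    · rcases Δ.at_most_two x hxr e₁.val e₂.val e₃.val h₁ h₂ h₃ with h | h | h
      · exact Or.inl (Subtype.ext h)
      · exact Or.inr (Or.inl (Subtype.ext h))
      · exact Or.inr (Or.inr (Subtype.ext h))

end Drawing

namespace Multigraph

/-- A graph is planar if it has a drawing without crossings. -/
def IsPlanar (G : Multigraph) : Prop := ∃ Δ : Drawing G, Δ.crossings = ∅

/-- The crossing number of `G` is at most `k`. -/
def CrossingNumberLE (G : Multigraph) (k : ℕ) : Prop :=
  ∃ Δ : Drawing G, Δ.CrossingsAtMost k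

end Multigraph

/-- A simple closed curve in the plane: a continuous injective image of a circle. -/
def IsSimpleClosedCurve (s : Set (ℝ × ℝ)) : Prop :=
  ∃ f : AddCircle (1 : ℝ) → ℝ × ℝ, Continuous f ∧ Function.Injective f ∧ Set.range f = s
/-! ### H-components -/

namespace Multigraph

variable {G : Multigraph}

/-- The subgraph consisting of a single edge together with its endpoints. -/
def edgeComp (G : Multigraph) (e : G.E) : G.Subgraph where
  verts := {v | v ∈ G.ends e}
  edges := {e}
  closed := by
    rintro f rfl v hv
    exact hv

/-- For a subgraph `H` of `G` and a vertex `u ∉ H`, the `H`-component of `G`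
determined by `u`: the connected component of `G ∖ H` containing `u`, together with
all edges joining it to `H` and their endpoints in `H`. -/
def attachComp (G : Multigraph) (H : G.Subgraph) (u : G.V) : G.Subgraph where
  verts := {v | (G.deleteVerts H.verts).Reach u v} ∪
    {v | v ∈ H.verts ∧ ∃ (e : G.E) (w : G.V), G.ends e = s(w, v) ∧
      (G.deleteVerts H.verts).Reach u w}
  edges := {e | e ∈ (G.deleteVerts H.verts).edges ∧
      ∀ v ∈ G.ends e, (G.deleteVerts H.verts).Reach u v} ∪
    {e | ∃ (w v : G.V), G.ends e = s(w, v) ∧ (G.deleteVerts H.verts).Reach u w ∧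
      v ∈ H.verts}
  closed := by
    rintro e (⟨-, he⟩ | ⟨w, v, hwv, hw, hv⟩) x hx
    · exact Or.inl (he x hx)
    · rw [hwv, Sym2.mem_iff] at hx
      rcases hx with rfl | rfl
      · exact Or.inl hw
      · exact Or.inr ⟨hv, e, w, hwv, hw⟩

/-- `C` is an `H`-component of `G`: either a connected component of `G ∖ H` together
with the edges joining it to `H` and their endpoints in `H`, or a single edge of
`G` outside `H` with both endpoints in `H`, together with its endpoints. -/
def IsHComp (G : Multigraph) (H C : G.Subgraph) : Prop :=
  (∃ u : G.V, u ∉ H.verts ∧ C = G.attachComp H u) ∨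
  (∃ e : G.E, e ∉ H.edges ∧ (∀ v ∈ G.ends e, v ∈ H.verts) ∧ C = G.edgeComp e)

/-! ### Graph embeddings (subgraph copies) -/

/-- An embedding of the graph `H` into the graph `G`: injective maps on vertices and
edges that respect endpoints.  The image is a subgraph of `G` isomorphic to `H`. -/
structure Emb (H G : Multigraph) where
  vmap : H.V → G.V
  emap : H.E → G.E
  vmap_inj : Function.Injective vmap
  emap_inj : Function.Injective emap
  ends_map : ∀ e : H.E, G.ends (emap e) = (H.ends e).map vmap

end Multigraph

/-! ### Topological embeddings -/

/-- A topological embedding of `H` into `G`: an injective map on vertices together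
with, for every edge `e` of `H`, a path in `G` (recorded by its vertex set
`pVerts e` and edge set `pEdges e`) joining the images of the endpoints of `e` and
avoiding the images of all other vertices, such that the paths of distinct edges are
internally disjoint. -/
structure TopEmb (H G : Multigraph) where
  vmap : H.V → G.V
  vmap_inj : Function.Injective vmap
  pVerts : H.E → Set G.V
  pEdges : H.E → Set G.E
  is_path : ∀ e : H.E, ∃ (a b : H.V) (w : G.Walk (vmap a) (vmap b)),
    H.ends e = s(a, b) ∧ w.IsPath ∧
    pVerts e = {x | x ∈ w.support} ∧ pEdges e = {f | f ∈ w.edgeList} ∧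
    ∀ u : H.V, u ∉ H.ends e → vmap u ∉ w.support
  int_disjoint : ∀ e f : H.E, e ≠ f → ∀ x ∈ pVerts e ∩ pVerts f,
    ∃ a : H.V, a ∈ H.ends e ∧ a ∈ H.ends f ∧ x = vmap a
  edge_disjoint : ∀ e f : H.E, e ≠ f → pEdges e ∩ pEdges f = ∅

namespace TopEmb

variable {H G : Multigraph}

/-- The image `h(S)` of a subgraph `S ⊆ H` under a topological embedding `h`. -/
def imageOf (h : TopEmb H G) (S : H.Subgraph) : G.Subgraph where
  verts := (h.vmap '' S.verts) ∪ ⋃ e ∈ S.edges, h.pVerts e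
  edges := ⋃ e ∈ S.edges, h.pEdges e
  closed := by
    intro f hf v hv
    simp only [Set.mem_iUnion] at hf
    obtain ⟨e, he, hfe⟩ := hf
    obtain ⟨a, b, w, -, -, hV, hE, -⟩ := h.is_path e
    right
    simp only [Set.mem_iUnion]
    refine ⟨e, he, ?_⟩
    rw [hV]
    rw [hE] at hfe
    exact Multigraph.Walk.mem_support_of_mem_edgeList w f v hfe hv

/-- The image `h(H)` of a topological embedding. -/
def image (h : TopEmb H G) : G.Subgraph := h.imageOf (Multigraph.Subgraph.top H)

end TopEmb
/-! ### Hexagonal grids -/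

/-- The vertex type of the hexagonal grid of radius `r`: the vertices are arranged on
`r` concentric principal cycles, the `i`-th of which (counting from the inside,
starting at `i = 0`) has `6 * (2 * i + 1)` vertices. -/
abbrev HexV (r : ℕ) : Type := (i : Fin r) × ZMod (6 * (2 * i.val + 1))

/-- The endpoint on the `i`-th principal cycle of the `k`-th spoke joining the `i`-th
and the `(i+1)`-st principal cycle. -/
def spokeOutV (r : ℕ) (i : Fin (r - 1)) (k : ℕ) : HexV r :=
  ⟨⟨i.val, by have := i.isLt; omega⟩,
    ((k / (i.val + 1)) * (2 * i.val + 1) + 2 * (k % (i.val + 1)) : ℕ)⟩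

/-- The endpoint on the `(i+1)`-st principal cycle of the `k`-th spoke joining the
`i`-th and the `(i+1)`-st principal cycle. -/
def spokeInV (r : ℕ) (i : Fin (r - 1)) (k : ℕ) : HexV r :=
  ⟨⟨i.val + 1, by have := i.isLt; omega⟩,
    ((k / (i.val + 1)) * (2 * (i.val + 1) + 1) + 2 * (k % (i.val + 1)) + 1 : ℕ)⟩

/-- The hexagonal grid of radius `r` (`r` concentric cycles of hexagons): its vertices
lie on `r` principal cycles, the `i`-th principal cycle (0-indexed) having
`6 * (2 * i + 1)` vertices and being joined to the next one by `6 * (i + 1)` spokes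
attached alternatingly. -/
def hexGrid (r : ℕ) : Multigraph where
  V := HexV r
  E := ((i : Fin r) × ZMod (6 * (2 * i.val + 1))) ⊕ ((i : Fin (r - 1)) × ZMod (6 * (i.val + 1)))
  ends := fun e => match e with
    | .inl ⟨i, j⟩ => s((⟨i, j⟩ : HexV r), ⟨i, j + 1⟩)
    | .inr ⟨i, k⟩ => s(spokeOutV r i k.val, spokeInV r i k.val)
  loopless := by
    rintro (⟨i, j⟩ | ⟨i, k⟩) h
    · rw [Sym2.mk_isDiag_iff] at h
      have hj : j = j + 1 := eq_of_heq (Sigma.ext_iff.mp h).2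
      have h1 : (1 : ZMod (6 * (2 * i.val + 1))) = 0 := left_eq_add.mp hj
      haveI : Fact (1 < 6 * (2 * i.val + 1)) := ⟨by omega⟩
      exact one_ne_zero h1
    · rw [Sym2.mk_isDiag_iff] at h
      have := congrArg (fun v : HexV r => v.1.val) h
      simp [spokeOutV, spokeInV] at this

@[simp] lemma hexGrid_ends_inl (r : ℕ) (i : Fin r) (j : ZMod (6 * (2 * i.val + 1))) :
    (hexGrid r).ends (Sum.inl ⟨i, j⟩) = s((⟨i, j⟩ : HexV r), ⟨i, j + 1⟩) := rfl

@[simp] lemma hexGrid_ends_inr (r : ℕ) (i : Fin (r - 1)) (k : ZMod (6 * (i.val + 1))) :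
    (hexGrid r).ends (Sum.inr ⟨i, k⟩) = s(spokeOutV r i k.val, spokeInV r i k.val) := rfl

/-- The `i`-th principal cycle of the hexagonal grid of radius `r` (`i` is 0-indexed,
so `i = ⟨0, _⟩` is the innermost principal cycle `C_1` of the paper and
`i = ⟨r-1, _⟩` the outermost one `C_r`). -/
def principalCycle (r : ℕ) (i : Fin r) : (hexGrid r).Subgraph where
  verts := {v | v.1 = i}
  edges := {e | ∃ j, e = Sum.inl ⟨i, j⟩}
  closed := by
    rintro e ⟨j, rfl⟩ v hv
    rw [hexGrid_ends_inl] at hv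
    rcases Sym2.mem_iff.mp hv with rfl | rfl <;> rfl

/-- The subgrid `H^i` of the hexagonal grid bounded by the `i`-th principal cycle:
the induced subgraph on the vertices of the principal cycles `C_1, …, C_i`. -/
def hexSubgridLE (r : ℕ) (i : Fin r) : (hexGrid r).Subgraph :=
  (hexGrid r).induce {v | v.1 ≤ i}

/-- The subgrid `H^i ∖ C_i` of the hexagonal grid: everything strictly inside the
`i`-th principal cycle. -/
def hexSubgridLT (r : ℕ) (i : Fin r) : (hexGrid r).Subgraph :=
  (hexGrid r).induce {v | v.1 < i}

namespace TopEmb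

variable {G : Multigraph} {r : ℕ}

/-- An attachment of a topological embedding `h : H_r → G`: an `h(H_r)`-component of
`G` that intersects the interior `h(H_r ∖ C_r)` of `h(H_r)`. -/
def IsAttachment (h : TopEmb (hexGrid r) G) (C : G.Subgraph) : Prop :=
  G.IsHComp h.image C ∧
  (C.verts ∩ (h.imageOf ((hexGrid r).deleteVerts {v | v.1.val = r - 1})).verts).Nonempty

/-- A topological embedding `h : H_r → G` is flat if the union of `h(H_r)` with all
its attachments is planar. -/
def Flat (h : TopEmb (hexGrid r) G) : Prop :=
  ((h.image.union (Multigraph.Subgraph.sUnion {C | h.IsAttachment C})).toGraph).IsPlanar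

/-- The subgraph `K_i` of `G`: the image `h(H^i)` together with all attachments of
`h(H_r)` that intersect the interior `h(H^i ∖ C_i)`. -/
def K (h : TopEmb (hexGrid r) G) (i : Fin r) : G.Subgraph :=
  (h.imageOf (hexSubgridLE r i)).union
    (Multigraph.Subgraph.sUnion {C | h.IsAttachment C ∧
      (C.verts ∩ (h.imageOf (hexSubgridLT r i)).verts).Nonempty})

/-- The edge set `F_i`: all edges of `K_i` having at least one endpoint on `h(C_i)`. -/
def Fset (h : TopEmb (hexGrid r) G) (i : Fin r) : Set G.E :=
  {e | e ∈ (h.K i).edges ∧ ∃ v ∈ G.ends e, v ∈ (h.imageOf (principalCycle r i)).verts}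

/-- The subgraph `I_i = K_i ∖ h(C_i)`: delete from `K_i` all vertices of `h(C_i)` and
all edges incident with them. -/
def Iset (h : TopEmb (hexGrid r) G) (i : Fin r) : G.Subgraph :=
  (h.K i).delete (h.imageOf (principalCycle r i)).verts

end TopEmb
/-! ### Graph constructions -/

namespace Multigraph

open Classical in
/-- The graph obtained from `G` by contracting the (induced) subgraph on a vertex set
`A` to a single new vertex: all vertices of `A` and all edges with both endpoints in
`A` are deleted, a new vertex (the vertex `Sum.inr ()`) is added, and every edge with
exactly one endpoint in `A` now joins its other endpoint to the new vertex. -/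
noncomputable def contract (G : Multigraph) (A : Set G.V) : Multigraph where
  V := {v : G.V // v ∉ A} ⊕ Unit
  E := {e : G.E // ∃ v ∈ G.ends e, v ∉ A}
  ends := fun e => (G.ends e.val).map
    (fun v => if h : v ∈ A then Sum.inr () else Sum.inl ⟨v, h⟩)
  loopless := by
    intro e he
    obtain ⟨v, hv, hvA⟩ := e.2
    obtain ⟨⟨a, b⟩, hab⟩ := Quot.exists_rep (G.ends e.val)
    have hab' : G.ends e.val = s(a, b) := hab.symm
    have hne : a ≠ b := fun hh => G.loopless e.val (by rw [hab']; exact Sym2.mk_isDiag_iff.mpr hh)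
    rw [hab'] at he hv
    rw [Sym2.map_pair_eq, Sym2.mk_isDiag_iff] at he
    rw [Sym2.mem_iff] at hv
    by_cases ha : a ∈ A <;> by_cases hb : b ∈ A
    · rcases hv with rfl | rfl <;> exact hvA (by assumption)
    · rw [dif_pos ha, dif_neg hb] at he; exact absurd he (by simp)
    · rw [dif_neg ha, dif_pos hb] at he; exact absurd he (by simp)
    · rw [dif_neg ha, dif_neg hb] at he
      exact hne (congrArg Subtype.val (Sum.inl_injective he))

/-- The graph `G^{e₁ × e₂}` obtained from `G` by crossing the two distinct edges
`e₁` and `e₂`: delete `e₁` and `e₂`, add a new vertex (the vertex `Sum.inr ()`), and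
add four new edges joining the new vertex to the two endpoints of `e₁` and to the two
endpoints of `e₂`. -/
def crossAt (G : Multigraph) (e₁ e₂ : G.E) : Multigraph where
  V := G.V ⊕ Unit
  E := {e : G.E // e ≠ e₁ ∧ e ≠ e₂} ⊕
    {p : Fin 2 × G.V // p.2 ∈ G.ends (if p.1 = 0 then e₁ else e₂)}
  ends := fun f => match f with
    | .inl g => (G.ends g.val).map Sum.inl
    | .inr p => s(Sum.inl p.val.2, Sum.inr ())
  loopless := by
    rintro (g | p) h
    · exact G.loopless g.val ((Sym2.isDiag_map Sum.inl_injective).mp h)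
    · rw [Sym2.mk_isDiag_iff] at h
      exact absurd h (by simp)

/-- A set `F` of edges of `G`, viewed as a set of edges of `G^{e₁ × e₂}` (only
meaningful when `e₁, e₂ ∉ F`). -/
def liftF (G : Multigraph) (e₁ e₂ : G.E) (F : Set G.E) : Set (G.crossAt e₁ e₂).E :=
  {f | ∃ g : {e : G.E // e ≠ e₁ ∧ e ≠ e₂}, f = Sum.inl g ∧ g.val ∈ F}

/-- The `j`-th vertex (for `0 ≤ j ≤ k`) on the path of length `k` replacing the
edge `e` in the subdivision of `G` in which every edge is subdivided `k - 1` times. -/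
noncomputable def subdivVert (G : Multigraph) (k : ℕ) (e : G.E) (j : ℕ) : G.V ⊕ (G.E × Fin (k - 1)) :=
  if h0 : j = 0 then Sum.inl (Quot.out (G.ends e)).1
  else if h : j < k then Sum.inr (e, ⟨j - 1, by omega⟩)
  else Sum.inl (Quot.out (G.ends e)).2

/-- The graph `G̃` obtained from `G` by subdividing every edge `k - 1` times, that
is, replacing every edge by a path of length `k` (for `k ≥ 1`). -/
noncomputable def subdivide (G : Multigraph) (k : ℕ) : Multigraph where
  V := G.V ⊕ (G.E × Fin (k - 1))
  E := G.E × Fin k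
  ends := fun p => s(G.subdivVert k p.1 p.2.val, G.subdivVert k p.1 (p.2.val + 1))
  loopless := by
    rintro ⟨e, j⟩ h
    dsimp only at h
    rw [Sym2.mk_isDiag_iff] at h
    have hj : j.val < k := j.isLt
    unfold subdivVert at h
    by_cases h0 : j.val = 0
    · rw [dif_pos h0] at h
      by_cases h1 : j.val + 1 < k
      · rw [dif_neg (by omega), dif_pos h1] at h
        exact absurd h (by simp)
      · rw [dif_neg (by omega), dif_neg (by omega)] at h
        exact sym2_out_ne _ (G.loopless e) (Sum.inl_injective h)
    · rw [dif_neg h0, dif_pos hj] at h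
      by_cases h1 : j.val + 1 < k
      · rw [dif_neg (by omega), dif_pos h1] at h
        have h3 := Sum.inr_injective h
        rw [Prod.mk.injEq] at h3
        have h2 : j.val - 1 = j.val + 1 - 1 := congrArg Fin.val h3.2
        omega
      · rw [dif_neg (by omega), dif_neg (by omega)] at h
        exact absurd h (by simp)

/-- The set of edges of the subdivision `G̃` of `G` arising from the subdivision of
an edge in `F`. -/
def subdivF (G : Multigraph) (k : ℕ) (F : Set G.E) : Set (G.subdivide k).E :=
  {p | p.1 ∈ F}

/-- The graph `G^{×ē}` obtained from `G` by successively crossing `e 0` with `e 1`,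
`e 2` with `e 3`, …, `e (2l-2)` with `e (2l-1)` (for pairwise distinct edges
`e 0, …, e (2l-1)`): the crossed edges are deleted, `l` new vertices are added (one
for each pair), and each new vertex is joined by four new edges to the endpoints of
the two edges of its pair. -/
def multiCross (G : Multigraph) (l : ℕ) (e : Fin (2 * l) → G.E) : Multigraph where
  V := G.V ⊕ Fin l
  E := {f : G.E // ∀ i, f ≠ e i} ⊕ {p : Fin (2 * l) × G.V // p.2 ∈ G.ends (e p.1)}
  ends := fun f => match f with
    | .inl g => (G.ends g.val).map Sum.inl
    | .inr p => s(Sum.inl p.val.2,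
        (Sum.inr ⟨p.val.1.val / 2, by have := p.val.1.isLt; omega⟩ : G.V ⊕ Fin l))
  loopless := by
    rintro (g | p) h
    · exact G.loopless g.val ((Sym2.isDiag_map Sum.inl_injective).mp h)
    · rw [Sym2.mk_isDiag_iff] at h
      exact absurd h (by simp)

end Multigraph

/-!
A drawing in which every edge is involved in at most one crossing is the same as a planar
drawing of the graph in which every crossing has been turned into a vertex. Given such a drawing
of `G` with crossings `x 0, …, x (l - 1)`, let `e (2i)` and `e (2i + 1)` be the two edges
crossing at `x i`; these `2l` edges are pairwise distinct because every edge has only one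
crossing. Cutting each of them at its crossing and making `x i` a vertex gives a planar drawing
of `G^{×ē}`. Conversely, in a planar drawing of `G^{×ē}`, redraw each crossed edge `e m` as the
concatenation of its two half-edges through the new vertex `m / 2`. Distinct edges then meet in
their interiors only at new vertices, so all crossings are among the `l ≤ k` new vertices, and
each edge passes through at most one of them.
-/

open Set

namespace Curve

variable {X : Type*}

noncomputable def subarc (f : ℝ → X) (a b : ℝ) : ℝ → X := f ∘ AffineMap.lineMap a b

@[simp] lemma subarc_zero (f : ℝ → X) (a b : ℝ) : subarc f a b 0 = f a := by
  simp [subarc]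

@[simp] lemma subarc_one (f : ℝ → X) (a b : ℝ) : subarc f a b 1 = f b := by
  simp [subarc]

lemma image_subarc_Icc (f : ℝ → X) (a b : ℝ) : subarc f a b '' Icc 0 1 = f '' uIcc a b := by
  rw [subarc, image_comp, ← segment_eq_image_lineMap, segment_eq_uIcc]

lemma image_subarc_Ioo (f : ℝ → X) {a b : ℝ} (hab : a ≠ b) :
    subarc f a b '' Ioo 0 1 = f '' uIoo a b := by
  rw [subarc, image_comp, ← openSegment_eq_image_lineMap, openSegment_eq_Ioo' hab]
  rfl

lemma mapsTo_lineMap_Icc {a b : ℝ} (ha : a ∈ Icc (0 : ℝ) 1) (hb : b ∈ Icc (0 : ℝ) 1) :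
    MapsTo (AffineMap.lineMap a b : ℝ → ℝ) (Icc 0 1) (Icc 0 1) := by
  rw [mapsTo_iff_image_subset, ← segment_eq_image_lineMap, segment_eq_uIcc]
  exact uIcc_subset_Icc ha hb

lemma continuousOn_subarc [TopologicalSpace X] {f : ℝ → X} (hf : ContinuousOn f (Icc 0 1))
    {a b : ℝ} (ha : a ∈ Icc (0 : ℝ) 1) (hb : b ∈ Icc (0 : ℝ) 1) :
    ContinuousOn (subarc f a b) (Icc 0 1) :=
  hf.comp AffineMap.lineMap_continuous.continuousOn (mapsTo_lineMap_Icc ha hb)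

lemma injOn_subarc {f : ℝ → X} (hf : InjOn f (Icc 0 1)) {a b : ℝ} (ha : a ∈ Icc (0 : ℝ) 1)
    (hb : b ∈ Icc (0 : ℝ) 1) (hab : a ≠ b) : InjOn (subarc f a b) (Icc 0 1) :=
  hf.comp (AffineMap.lineMap_injective ℝ hab).injOn (mapsTo_lineMap_Icc ha hb)

noncomputable def append (f g : ℝ → X) : ℝ → X :=
  fun t => if t ≤ 1 / 2 then f (2 * t) else g (2 * t - 1)

@[simp] lemma append_zero (f g : ℝ → X) : append f g 0 = f 0 := by
  simp [append]

@[simp] lemma append_one (f g : ℝ → X) : append f g 1 = g 1 := by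
  norm_num [append]

lemma append_of_le {f g : ℝ → X} {t : ℝ} (ht : t ≤ 1 / 2) : append f g t = f (2 * t) :=
  if_pos ht

lemma append_of_lt {f g : ℝ → X} {t : ℝ} (ht : 1 / 2 < t) : append f g t = g (2 * t - 1) :=
  if_neg (not_le.mpr ht)

lemma continuousOn_append [TopologicalSpace X] {f g : ℝ → X} (hf : ContinuousOn f (Icc 0 1))
    (hg : ContinuousOn g (Icc 0 1)) (hfg : f 1 = g 0) :
    ContinuousOn (append f g) (Icc 0 1) := by
  refine ContinuousOn.if (fun t ht => ?_) (hf.comp (by fun_prop) fun t ht => ?_)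
    (hg.comp (by fun_prop) fun t ht => ?_)
  · rw [show {t : ℝ | t ≤ 1 / 2} = Iic (1 / 2) from rfl, frontier_Iic] at ht
    obtain rfl : t = 1 / 2 := ht.2
    norm_num [hfg]
  · rw [show {t : ℝ | t ≤ 1 / 2} = Iic (1 / 2) from rfl, closure_Iic] at ht
    constructor <;> linarith [ht.1.1, ht.2.out]
  · rw [show {t : ℝ | ¬t ≤ 1 / 2} = Ioi (1 / 2) by ext; simp, closure_Ioi] at ht
    constructor <;> linarith [ht.1.2, ht.2.out]

lemma image_append_Icc {f g : ℝ → X} (hfg : f 1 = g 0) :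
    append f g '' Icc 0 1 = f '' Icc 0 1 ∪ g '' Icc 0 1 := by
  ext x
  constructor
  · rintro ⟨t, ht, rfl⟩
    rcases le_or_gt t (1 / 2) with h | h
    · exact Or.inl ⟨2 * t, ⟨by linarith [ht.1], by linarith⟩, (append_of_le h).symm⟩
    · exact Or.inr ⟨2 * t - 1, ⟨by linarith, by linarith [ht.2]⟩, (append_of_lt h).symm⟩
  · rintro (⟨s, hs, rfl⟩ | ⟨s, hs, rfl⟩)
    · refine ⟨s / 2, ⟨by linarith [hs.1], by linarith [hs.2]⟩, ?_⟩
      rw [append_of_le (by linarith [hs.2])]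
      ring_nf
    · rcases hs.1.eq_or_lt with rfl | hs0
      · exact ⟨1 / 2, by norm_num, by rw [append_of_le le_rfl]; norm_num [hfg]⟩
      · refine ⟨(s + 1) / 2, ⟨by linarith, by linarith [hs.2]⟩, ?_⟩
        rw [append_of_lt (by linarith)]
        ring_nf

lemma image_append_Ioo (f g : ℝ → X) :
    append f g '' Ioo 0 1 = f '' Ioo 0 1 ∪ {f 1} ∪ g '' Ioo 0 1 := by
  ext x
  constructor
  · rintro ⟨t, ht, rfl⟩
    rcases lt_trichotomy t (1 / 2) with h | rfl | h
    · exact Or.inl (Or.inl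
        ⟨2 * t, ⟨by linarith [ht.1], by linarith⟩, (append_of_le h.le).symm⟩)
    · exact Or.inl (Or.inr (by rw [append_of_le le_rfl]; norm_num))
    · exact Or.inr ⟨2 * t - 1, ⟨by linarith, by linarith [ht.2]⟩, (append_of_lt h).symm⟩
  · rintro ((⟨s, hs, rfl⟩ | rfl) | ⟨s, hs, rfl⟩)
    · refine ⟨s / 2, ⟨by linarith [hs.1], by linarith [hs.2]⟩, ?_⟩
      rw [append_of_le (by linarith [hs.2])]
      ring_nf
    · exact ⟨1 / 2, by norm_num, by rw [append_of_le le_rfl]; norm_num⟩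
    · refine ⟨(s + 1) / 2, ⟨by linarith [hs.1], by linarith [hs.2]⟩, ?_⟩
      rw [append_of_lt (by linarith [hs.1])]
      ring_nf

lemma injOn_append {f g : ℝ → X} (hf : InjOn f (Icc 0 1)) (hg : InjOn g (Icc 0 1))
    (hfg : f 1 = g 0) (hinter : f '' Icc 0 1 ∩ g '' Icc 0 1 ⊆ {f 1}) :
    InjOn (append f g) (Icc 0 1) := by
  have mixed : ∀ s ∈ Icc (0 : ℝ) 1, ∀ t ∈ Icc (0 : ℝ) 1,
      f s = g t → s = 1 ∧ t = 0 :=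
    fun s hs t ht hst => by
      have hs1 : f s = f 1 := hinter ⟨mem_image_of_mem f hs, t, ht, hst.symm⟩
      exact ⟨hf hs (by norm_num) hs1, hg ht (by norm_num) (by rw [← hst, hs1, hfg])⟩
  intro s hs t ht hst
  rcases le_or_gt s (1 / 2) with h₁ | h₁ <;> rcases le_or_gt t (1 / 2) with h₂ | h₂
  · rw [append_of_le h₁, append_of_le h₂] at hst
    linarith [hf ⟨by linarith [hs.1], by linarith⟩ ⟨by linarith [ht.1], by linarith⟩ hst]
  · rw [append_of_le h₁, append_of_lt h₂] at hst
    have := mixed _ ⟨by linarith [hs.1], by linarith⟩ _ ⟨by linarith, by linarith [ht.2]⟩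
      hst
    linarith [this.1, this.2]
  · rw [append_of_lt h₁, append_of_le h₂] at hst
    have := mixed _ ⟨by linarith [ht.1], by linarith⟩ _ ⟨by linarith, by linarith [hs.2]⟩
      hst.symm
    linarith [this.1, this.2]
  · rw [append_of_lt h₁, append_of_lt h₂] at hst
    linarith [hg ⟨by linarith, by linarith [hs.2]⟩ ⟨by linarith, by linarith [ht.2]⟩ hst]

end Curve

namespace Set

lemma uIcc_inter_uIcc_subset_singleton {c c' t : ℝ} (ht : t ∈ uIoo c c') :
    uIcc c t ∩ uIcc c' t ⊆ {t} := by
  rintro y ⟨hy, hy'⟩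
  rw [mem_uIcc] at hy hy'
  rw [uIoo_eq_union] at ht
  rw [mem_singleton_iff]
  rcases ht with ⟨h₁, h₂⟩ | ⟨h₁, h₂⟩ <;> rcases hy with ⟨_, _⟩ | ⟨_, _⟩ <;>
    rcases hy' with ⟨_, _⟩ | ⟨_, _⟩ <;> linarith

lemma disjoint_uIoo_uIoo {c c' t : ℝ} (ht : t ∈ uIoo c c') :
    Disjoint (uIoo c t) (uIoo c' t) := by
  rw [disjoint_left]
  intro y hy hy'
  rw [uIoo_eq_union] at ht hy hy'
  rcases ht with ⟨_, _⟩ | ⟨_, _⟩ <;> rcases hy with ⟨_, _⟩ | ⟨_, _⟩ <;>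
    rcases hy' with ⟨_, _⟩ | ⟨_, _⟩ <;> linarith

lemma notMem_uIcc_of_mem_uIoo {c c' t : ℝ} (ht : t ∈ uIoo c c') : c' ∉ uIcc c t := by
  rw [mem_uIcc]
  rw [uIoo_eq_union] at ht
  rcases ht with ⟨_, _⟩ | ⟨_, _⟩ <;> rintro (⟨_, _⟩ | ⟨_, _⟩) <;> linarith

end Set

/-- The vertex `m / 2` of `G.multiCross l e` to which the half-edges of `e m` are joined. -/
def finHalf {l : ℕ} (m : Fin (2 * l)) : Fin l := ⟨m / 2, by omega⟩

def finEven {l : ℕ} (i : Fin l) : Fin (2 * l) := ⟨2 * i, by omega⟩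

def finOdd {l : ℕ} (i : Fin l) : Fin (2 * l) := ⟨2 * i + 1, by omega⟩

@[simp] lemma finHalf_finEven {l : ℕ} (i : Fin l) : finHalf (finEven i) = i :=
  Fin.ext (by simp [finHalf, finEven])

@[simp] lemma finHalf_finOdd {l : ℕ} (i : Fin l) : finHalf (finOdd i) = i :=
  Fin.ext (by simp [finHalf, finOdd]; omega)

lemma eq_finEven_or_eq_finOdd {l : ℕ} (m : Fin (2 * l)) :
    m = finEven (finHalf m) ∨ m = finOdd (finHalf m) := by
  rcases Nat.even_or_odd' m.val with ⟨j, hj | hj⟩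
  · exact Or.inl (Fin.ext (by simp [finEven, finHalf]; omega))
  · exact Or.inr (Fin.ext (by simp [finOdd, finHalf]; omega))

lemma eq_of_finHalf_eq_finHalf {l : ℕ} {m₁ m₂ m₃ : Fin (2 * l)}
    (h₁₂ : finHalf m₁ = finHalf m₂) (h₁₃ : finHalf m₁ = finHalf m₃) :
    m₁ = m₂ ∨ m₁ = m₃ ∨ m₂ = m₃ := by
  simp only [finHalf, Fin.ext_iff] at h₁₂ h₁₃ ⊢
  omega

lemma finEven_ne_finOdd {l : ℕ} (i : Fin l) : finEven i ≠ finOdd i := by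
  simp [finEven, finOdd, Fin.ext_iff]

def interleave {α : Type*} {l : ℕ} (a b : Fin l → α) (m : Fin (2 * l)) : α :=
  if m.val % 2 = 0 then a (finHalf m) else b (finHalf m)

@[simp] lemma interleave_finEven {α : Type*} {l : ℕ} (a b : Fin l → α) (i : Fin l) :
    interleave a b (finEven i) = a i := by
  rw [interleave, if_pos (by simp [finEven]), finHalf_finEven]

@[simp] lemma interleave_finOdd {α : Type*} {l : ℕ} (a b : Fin l → α) (i : Fin l) :
    interleave a b (finOdd i) = b i := by
  rw [interleave, if_neg (by simp [finOdd, Nat.add_mod]), finHalf_finOdd]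

lemma eq_of_interleave_eq {α : Type*} {l : ℕ} {a b : Fin l → α} (hab : ∀ i, a i ≠ b i)
    {m m' : Fin (2 * l)} (h : interleave a b m = interleave a b m')
    (hh : finHalf m = finHalf m') : m = m' := by
  rcases eq_finEven_or_eq_finOdd m with hm | hm <;>
    rcases eq_finEven_or_eq_finOdd m' with hm' | hm' <;>
    rw [hm, hm', hh] <;> rw [hm, hm', hh] at h <;>
    simp only [interleave_finEven, interleave_finOdd] at h
  · exact absurd h (hab _)
  · exact absurd h.symm (hab _)

namespace Multigraph

lemma ne_of_ends_eq {H : Multigraph} {q : H.E} {v w : H.V} (h : H.ends q = s(v, w)) :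
    v ≠ w := fun hvw => H.loopless q (h ▸ Sym2.mk_isDiag_iff.mpr hvw)

variable {G : Multigraph} {l : ℕ} (e : Fin (2 * l) → G.E)

def parentEdge : (G.multiCross l e).E → G.E := Sum.elim Subtype.val fun p => e p.val.1

def halfEdge (m : Fin (2 * l)) (u : G.V) (hu : u ∈ G.ends (e m)) : (G.multiCross l e).E :=
  .inr ⟨(m, u), hu⟩

variable {e}

lemma mem_ends_parentEdge {q : (G.multiCross l e).E} {v : G.V}
    (hv : .inl v ∈ (G.multiCross l e).ends q) : v ∈ G.ends (parentEdge e q) := by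
  rcases q with g | p
  · obtain ⟨w, hw, hwv⟩ := Sym2.mem_map.mp hv
    exact Sum.inl_injective hwv ▸ hw
  · rcases Sym2.mem_iff.mp hv with h | h
    · exact Sum.inl_injective h ▸ p.2
    · exact absurd h Sum.inl_ne_inr

lemma exists_parentEdge_eq_of_inr_mem_ends {q : (G.multiCross l e).E} {i : Fin l}
    (hi : .inr i ∈ (G.multiCross l e).ends q) :
    ∃ m, finHalf m = i ∧ parentEdge e q = e m := by
  rcases q with g | p
  · obtain ⟨w, -, hw⟩ := Sym2.mem_map.mp hi
    exact absurd hw Sum.inl_ne_inr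
  · rcases Sym2.mem_iff.mp hi with h | h
    · exact absurd h.symm Sum.inl_ne_inr
    · exact ⟨p.val.1, (Sum.inr_injective h).symm, rfl⟩

lemma eq_or_halfEdges_of_parentEdge_eq (he : Function.Injective e)
    {q q' : (G.multiCross l e).E} (h : parentEdge e q = parentEdge e q') :
    q = q' ∨
      ∃ p p', q = .inr p ∧ q' = .inr p' ∧ p.val.1 = p'.val.1 ∧ p.val.2 ≠ p'.val.2 := by
  rcases q with g | p <;> rcases q' with g' | p'
  · exact Or.inl (congrArg Sum.inl (Subtype.ext h))
  · exact absurd h (g.2 p'.val.1)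
  · exact absurd h.symm (g'.2 p.val.1)
  · have hm : p.val.1 = p'.val.1 := he h
    by_cases hu : p.val.2 = p'.val.2
    · exact Or.inl (congrArg Sum.inr (Subtype.ext (Prod.ext hm hu)))
    · exact Or.inr ⟨p, p', rfl, rfl, hm, hu⟩

end Multigraph

namespace Drawing

variable {H : Multigraph} (Δ : Drawing H)

noncomputable def endParam (q : H.E) (v : H.V) : ℝ := if Δ.par q 0 = Δ.vpos v then 0 else 1

lemma endParam_eq_zero_or_one (q : H.E) (v : H.V) :
    Δ.endParam q v = 0 ∨ Δ.endParam q v = 1 := by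
  unfold endParam
  split_ifs <;> simp

lemma endParam_mem_Icc (q : H.E) (v : H.V) : Δ.endParam q v ∈ Icc (0 : ℝ) 1 := by
  rcases Δ.endParam_eq_zero_or_one q v with h | h <;> simp [h]

variable {Δ}

lemma par_endParam {q : H.E} {v : H.V} (hv : v ∈ H.ends q) :
    Δ.par q (Δ.endParam q v) = Δ.vpos v := by
  obtain ⟨a, b, hab, h₀, h₁⟩ := Δ.ends_match q
  unfold endParam
  split_ifs with h
  · exact h
  · rw [hab, Sym2.mem_iff] at hv
    rcases hv with rfl | rfl
    · exact absurd h₀ h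
    · exact h₁

lemma endParam_ne {q : H.E} {v w : H.V} (hv : v ∈ H.ends q) (hw : w ∈ H.ends q)
    (hvw : v ≠ w) : Δ.endParam q v ≠ Δ.endParam q w := fun h =>
  hvw (Δ.vpos_inj (by rw [← par_endParam hv, h, par_endParam hw]))

lemma uIcc_endParam {q : H.E} {v w : H.V} (hv : v ∈ H.ends q) (hw : w ∈ H.ends q)
    (hvw : v ≠ w) : uIcc (Δ.endParam q v) (Δ.endParam q w) = Icc 0 1 := by
  have hne := endParam_ne (Δ := Δ) hv hw hvw
  rcases Δ.endParam_eq_zero_or_one q v with h | h <;>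
    rcases Δ.endParam_eq_zero_or_one q w with h' | h' <;> simp_all

lemma uIoo_endParam {q : H.E} {v w : H.V} (hv : v ∈ H.ends q) (hw : w ∈ H.ends q)
    (hvw : v ≠ w) : uIoo (Δ.endParam q v) (Δ.endParam q w) = Ioo 0 1 := by
  have hne := endParam_ne (Δ := Δ) hv hw hvw
  rcases Δ.endParam_eq_zero_or_one q v with h | h <;>
    rcases Δ.endParam_eq_zero_or_one q w with h' | h' <;>
    simp_all

variable (Δ)

lemma vpos_notMem_image_Ioo (v : H.V) (q : H.E) : Δ.vpos v ∉ Δ.par q '' Ioo 0 1 := by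
  rintro ⟨t, ht, hvt⟩
  have hv : v ∈ H.ends q := Δ.vertex_on_arc q v ⟨t, Ioo_subset_Icc_self ht, hvt⟩
  have := Δ.par_inj q (Ioo_subset_Icc_self ht) (Δ.endParam_mem_Icc q v)
    (hvt.trans (par_endParam hv).symm)
  rcases Δ.endParam_eq_zero_or_one q v with h | h <;> rw [h] at this <;> linarith [ht.1, ht.2]

variable {Δ}

lemma exists_mem_Ioo_par_eq {q : H.E} {y : ℝ × ℝ} (hy : y ∈ Δ.arc q)
    (hyv : y ∉ range Δ.vpos) : ∃ t ∈ Ioo (0 : ℝ) 1, Δ.par q t = y := by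
  obtain ⟨t, ht, rfl⟩ := hy
  obtain ⟨a, b, -, h₀, h₁⟩ := Δ.ends_match q
  refine ⟨t, ⟨ht.1.lt_of_ne ?_, ht.2.lt_of_ne ?_⟩, rfl⟩
  · rintro rfl
    exact hyv ⟨a, h₀.symm⟩
  · rintro rfl
    exact hyv ⟨b, h₁.symm⟩

lemma exists_vpos_eq_of_crossings_eq_empty (hpl : Δ.crossings = ∅) {q q' : H.E} (hqq' : q ≠ q')
    {y : ℝ × ℝ} (hy : y ∈ Δ.arc q) (hy' : y ∈ Δ.arc q') :
    ∃ v, Δ.vpos v = y ∧ v ∈ H.ends q ∧ v ∈ H.ends q' := by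
  by_cases hyv : y ∈ range Δ.vpos
  · obtain ⟨v, rfl⟩ := hyv
    exact ⟨v, rfl, Δ.vertex_on_arc q v hy, Δ.vertex_on_arc q' v hy'⟩
  · exact absurd (hpl ▸ ⟨hyv, q, q', hqq', hy, hy'⟩ : y ∈ (∅ : Set (ℝ × ℝ)))
      (notMem_empty y)

lemma disjoint_image_Ioo_arc_of_crossings_eq_empty (hpl : Δ.crossings = ∅) {q q' : H.E}
    (hqq' : q ≠ q') : Disjoint (Δ.par q '' Ioo 0 1) (Δ.arc q') := by
  rw [disjoint_left]
  intro y hy hy'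
  obtain ⟨v, rfl, -⟩ :=
    exists_vpos_eq_of_crossings_eq_empty hpl hqq' (image_mono Ioo_subset_Icc_self hy) hy'
  exact Δ.vpos_notMem_image_Ioo v q hy

variable (Δ)

noncomputable def orientedPar (q : H.E) (v w : H.V) : ℝ → ℝ × ℝ :=
  Curve.subarc (Δ.par q) (Δ.endParam q v) (Δ.endParam q w)

noncomputable def joinPar (q₁ q₂ : H.E) (a c b : H.V) : ℝ → ℝ × ℝ :=
  Curve.append (Δ.orientedPar q₁ a c) (Δ.orientedPar q₂ c b)

variable {Δ} {q q₁ q₂ : H.E} {a b c v w : H.V}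

lemma orientedPar_zero (h : H.ends q = s(v, w)) : Δ.orientedPar q v w 0 = Δ.vpos v :=
  (Curve.subarc_zero _ _ _).trans (par_endParam (h ▸ Sym2.mem_mk_left v w))

lemma orientedPar_one (h : H.ends q = s(v, w)) : Δ.orientedPar q v w 1 = Δ.vpos w :=
  (Curve.subarc_one _ _ _).trans (par_endParam (h ▸ Sym2.mem_mk_right v w))

lemma image_orientedPar_Icc (h : H.ends q = s(v, w)) :
    Δ.orientedPar q v w '' Icc 0 1 = Δ.arc q := by
  rw [orientedPar, Curve.image_subarc_Icc, uIcc_endParam (h ▸ Sym2.mem_mk_left v w)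
    (h ▸ Sym2.mem_mk_right v w) (Multigraph.ne_of_ends_eq h), arc]

lemma image_orientedPar_Ioo (h : H.ends q = s(v, w)) :
    Δ.orientedPar q v w '' Ioo 0 1 = Δ.par q '' Ioo 0 1 := by
  have hv := h ▸ Sym2.mem_mk_left v w
  have hw := h ▸ Sym2.mem_mk_right v w
  rw [orientedPar, Curve.image_subarc_Ioo _ (endParam_ne hv hw (Multigraph.ne_of_ends_eq h)),
    uIoo_endParam hv hw (Multigraph.ne_of_ends_eq h)]

lemma continuousOn_orientedPar (Δ : Drawing H) (q : H.E) (v w : H.V) :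
    ContinuousOn (Δ.orientedPar q v w) (Icc 0 1) :=
  Curve.continuousOn_subarc (Δ.par_cont q) (Δ.endParam_mem_Icc q v) (Δ.endParam_mem_Icc q w)

lemma injOn_orientedPar (h : H.ends q = s(v, w)) : InjOn (Δ.orientedPar q v w) (Icc 0 1) :=
  Curve.injOn_subarc (Δ.par_inj q) (Δ.endParam_mem_Icc q v) (Δ.endParam_mem_Icc q w)
    (endParam_ne (h ▸ Sym2.mem_mk_left v w) (h ▸ Sym2.mem_mk_right v w)
      (Multigraph.ne_of_ends_eq h))

lemma joinPar_zero (h₁ : H.ends q₁ = s(a, c)) : Δ.joinPar q₁ q₂ a c b 0 = Δ.vpos a :=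
  (Curve.append_zero _ _).trans (orientedPar_zero h₁)

lemma joinPar_one (h₂ : H.ends q₂ = s(c, b)) : Δ.joinPar q₁ q₂ a c b 1 = Δ.vpos b :=
  (Curve.append_one _ _).trans (orientedPar_one h₂)

lemma orientedPar_one_eq_zero (h₁ : H.ends q₁ = s(a, c)) (h₂ : H.ends q₂ = s(c, b)) :
    Δ.orientedPar q₁ a c 1 = Δ.orientedPar q₂ c b 0 :=
  (orientedPar_one h₁).trans (orientedPar_zero h₂).symm

lemma continuousOn_joinPar (h₁ : H.ends q₁ = s(a, c)) (h₂ : H.ends q₂ = s(c, b)) :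
    ContinuousOn (Δ.joinPar q₁ q₂ a c b) (Icc 0 1) :=
  Curve.continuousOn_append (Δ.continuousOn_orientedPar _ _ _)
    (Δ.continuousOn_orientedPar _ _ _)
    (orientedPar_one_eq_zero h₁ h₂)

lemma image_joinPar_Icc (h₁ : H.ends q₁ = s(a, c)) (h₂ : H.ends q₂ = s(c, b)) :
    Δ.joinPar q₁ q₂ a c b '' Icc 0 1 = Δ.arc q₁ ∪ Δ.arc q₂ := by
  rw [joinPar, Curve.image_append_Icc (orientedPar_one_eq_zero h₁ h₂),
    image_orientedPar_Icc h₁, image_orientedPar_Icc h₂]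

lemma image_joinPar_Ioo (h₁ : H.ends q₁ = s(a, c)) (h₂ : H.ends q₂ = s(c, b)) :
    Δ.joinPar q₁ q₂ a c b '' Ioo 0 1 =
    Δ.par q₁ '' Ioo 0 1 ∪ {Δ.vpos c} ∪ Δ.par q₂ '' Ioo 0 1 := by
  rw [joinPar, Curve.image_append_Ioo, image_orientedPar_Ioo h₁, image_orientedPar_Ioo h₂,
    orientedPar_one h₁]

/-- Injective because, in a planar drawing, a common point of the two edges is a common end,
and that can only be `c`. -/
lemma injOn_joinPar (h₁ : H.ends q₁ = s(a, c)) (h₂ : H.ends q₂ = s(c, b))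
    (hpl : Δ.crossings = ∅) (hab : a ≠ b) :
    InjOn (Δ.joinPar q₁ q₂ a c b) (Icc 0 1) := by
  have hq : q₁ ≠ q₂ := by
    rintro rfl
    rcases Sym2.eq_iff.mp (h₁.symm.trans h₂) with ⟨rfl, rfl⟩ | ⟨rfl, -⟩ <;>
      exact hab rfl
  refine Curve.injOn_append (injOn_orientedPar h₁) (injOn_orientedPar h₂)
    (orientedPar_one_eq_zero h₁ h₂) ?_
  rw [image_orientedPar_Icc h₁, image_orientedPar_Icc h₂, orientedPar_one h₁]
  rintro y ⟨hy₁, hy₂⟩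
  obtain ⟨z, rfl, hz₁, hz₂⟩ := exists_vpos_eq_of_crossings_eq_empty hpl hq hy₁ hy₂
  rw [h₁, Sym2.mem_iff] at hz₁
  rw [h₂, Sym2.mem_iff] at hz₂
  rcases hz₁ with rfl | rfl
  · rcases hz₂ with rfl | rfl
    · exact rfl
    · exact absurd rfl hab
  · exact rfl

end Drawing

namespace Drawing

variable {G : Multigraph}

/-- `pt i` is a crossing, `edge (finEven i)` and `edge (finOdd i)` are the two edges crossing
there, and `edge m` passes through its crossing at the parameter `param m`. -/
structure CrossingLabelling (Δ : Drawing G) (l : ℕ) where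
  pt : Fin l → ℝ × ℝ
  edge : Fin (2 * l) → G.E
  param : Fin (2 * l) → ℝ
  pt_injective : Function.Injective pt
  edge_injective : Function.Injective edge
  param_mem_Ioo : ∀ m, param m ∈ Ioo (0 : ℝ) 1
  par_param : ∀ m, Δ.par (edge m) (param m) = pt (finHalf m)
  pt_notMem_range_vpos : ∀ i, pt i ∉ range Δ.vpos
  mem_range_pt : ∀ y, Δ.IsCrossing y → y ∈ range pt
  eq_of_pt_mem_arc : ∀ f i j, pt i ∈ Δ.arc f → pt j ∈ Δ.arc f → i = j

lemma exists_crossingLabelling {Δ : Drawing G} {k : ℕ} (hΔ : Δ.CrossingsAtMost k)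
    (hsub : ∀ e : G.E, {x | Δ.IsCrossing x ∧ x ∈ Δ.arc e}.Subsingleton) :
    ∃ l ≤ k, Nonempty (Δ.CrossingLabelling l) := by
  have := hΔ.1.to_subtype
  let φ := (Finite.equivFin Δ.crossings).symm
  let pt i := (φ i).val
  have hpt : ∀ i, Δ.IsCrossing (pt i) := fun i => (φ i).2
  choose a b hab ha hb using fun i => (hpt i).2
  have hedge : ∀ m, pt (finHalf m) ∈ Δ.arc (interleave a b m) := by
    intro m
    rcases eq_finEven_or_eq_finOdd m with hm | hm <;> rw [hm]
    · rw [finHalf_finEven, interleave_finEven]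
      exact ha _
    · rw [finHalf_finOdd, interleave_finOdd]
      exact hb _
  have huniq : ∀ f i j, pt i ∈ Δ.arc f → pt j ∈ Δ.arc f → i = j := fun f i j hi hj =>
    φ.injective (Subtype.ext (hsub f ⟨hpt i, hi⟩ ⟨hpt j, hj⟩))
  choose param hparam hpar using fun m => exists_mem_Ioo_par_eq (hedge m) (hpt _).1
  exact ⟨Nat.card Δ.crossings, hΔ.2, ⟨
    { pt := pt
      edge := interleave a b
      param := param
      pt_injective := fun i j h => φ.injective (Subtype.ext h)
      edge_injective := fun m m' h =>
        eq_of_interleave_eq hab h (huniq _ _ _ (hedge m) (h ▸ hedge m'))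
      param_mem_Ioo := hparam
      par_param := hpar
      pt_notMem_range_vpos := fun i => (hpt i).1
      mem_range_pt := fun y hy =>
        ⟨φ.symm ⟨y, hy⟩, congrArg Subtype.val (φ.apply_symm_apply _)⟩
      eq_of_pt_mem_arc := huniq }⟩⟩

end Drawing

namespace Drawing.CrossingLabelling

open Multigraph

variable {G : Multigraph} {Δ : Drawing G} {l : ℕ} (L : Δ.CrossingLabelling l)

noncomputable def splitPar : (G.multiCross l L.edge).E → ℝ → ℝ × ℝ
  | .inl g => Δ.par g.val
  | .inr p => Curve.subarc (Δ.par (L.edge p.val.1)) (Δ.endParam (L.edge p.val.1) p.val.2)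
      (L.param p.val.1)

lemma pt_mem_arc (m : Fin (2 * l)) : L.pt (finHalf m) ∈ Δ.arc (L.edge m) :=
  ⟨_, Ioo_subset_Icc_self (L.param_mem_Ioo m), L.par_param m⟩

lemma endParam_ne_param (f : G.E) (u : G.V) (m : Fin (2 * l)) : Δ.endParam f u ≠ L.param m := by
  rcases Δ.endParam_eq_zero_or_one f u with h | h <;> rw [h]
  · exact (L.param_mem_Ioo m).1.ne
  · exact (L.param_mem_Ioo m).2.ne'

lemma uIcc_endParam_param_subset (f : G.E) (u : G.V) (m : Fin (2 * l)) :
    uIcc (Δ.endParam f u) (L.param m) ⊆ Icc 0 1 :=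
  uIcc_subset_Icc (Δ.endParam_mem_Icc f u) (Ioo_subset_Icc_self (L.param_mem_Ioo m))

lemma param_mem_uIoo {m : Fin (2 * l)} {u u' : G.V} (hu : u ∈ G.ends (L.edge m))
    (hu' : u' ∈ G.ends (L.edge m)) (huu' : u ≠ u') :
    L.param m ∈ uIoo (Δ.endParam (L.edge m) u) (Δ.endParam (L.edge m) u') := by
  rw [uIoo_endParam hu hu' huu']
  exact L.param_mem_Ioo m

lemma image_splitPar_inr_Icc (p : {p : Fin (2 * l) × G.V // p.2 ∈ G.ends (L.edge p.1)}) :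
    L.splitPar (.inr p) '' Icc 0 1 =
      Δ.par (L.edge p.val.1) '' uIcc (Δ.endParam (L.edge p.val.1) p.val.2) (L.param p.val.1) :=
  Curve.image_subarc_Icc _ _ _

lemma image_splitPar_inr_Ioo (p : {p : Fin (2 * l) × G.V // p.2 ∈ G.ends (L.edge p.1)}) :
    L.splitPar (.inr p) '' Ioo 0 1 =
      Δ.par (L.edge p.val.1) '' uIoo (Δ.endParam (L.edge p.val.1) p.val.2) (L.param p.val.1) :=
  Curve.image_subarc_Ioo _ (L.endParam_ne_param _ _ _)

lemma image_splitPar_Icc_subset (q : (G.multiCross l L.edge).E) :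
    L.splitPar q '' Icc 0 1 ⊆ Δ.arc (parentEdge L.edge q) := by
  rcases q with g | p
  · exact subset_rfl
  · rw [image_splitPar_inr_Icc]
    exact image_mono (L.uIcc_endParam_param_subset _ _ _)

lemma image_splitPar_Ioo_subset (q : (G.multiCross l L.edge).E) :
    L.splitPar q '' Ioo 0 1 ⊆ Δ.par (parentEdge L.edge q) '' Ioo 0 1 := by
  rcases q with g | p
  · exact subset_rfl
  · rw [image_splitPar_inr_Ioo]
    exact image_mono
      (uIoo_subset_Ioo (Δ.endParam_mem_Icc _ _) (Ioo_subset_Icc_self (L.param_mem_Ioo _)))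

lemma eq_of_mem_image_splitPar {q q' : (G.multiCross l L.edge).E}
    (hqq' : parentEdge L.edge q = parentEdge L.edge q') {y : ℝ × ℝ}
    (hy : y ∈ L.splitPar q '' Icc 0 1) (hy' : y ∈ L.splitPar q' '' Icc 0 1)
    (hyx : y ∉ range L.pt) : q = q' := by
  rcases eq_or_halfEdges_of_parentEdge_eq L.edge_injective hqq' with
    h | ⟨p, p', rfl, rfl, hm, hu⟩
  · exact h
  rw [image_splitPar_inr_Icc] at hy hy'
  rw [← hm] at hy'
  obtain ⟨s, hs, rfl⟩ := hy
  obtain ⟨s', hs', hss'⟩ := hy'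
  obtain rfl : s' = s := Δ.par_inj _ (L.uIcc_endParam_param_subset _ _ _ hs')
    (L.uIcc_endParam_param_subset _ _ _ hs) hss'
  obtain rfl : s' = L.param p.val.1 :=
    uIcc_inter_uIcc_subset_singleton (L.param_mem_uIoo p.2 (hm ▸ p'.2) hu) ⟨hs, hs'⟩
  exact absurd ⟨_, (L.par_param _).symm⟩ hyx

lemma disjoint_image_splitPar_Ioo {q q' : (G.multiCross l L.edge).E}
    (hqq' : parentEdge L.edge q = parentEdge L.edge q') (hne : q ≠ q') :
    Disjoint (L.splitPar q '' Ioo 0 1) (L.splitPar q' '' Ioo 0 1) := by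
  rcases eq_or_halfEdges_of_parentEdge_eq L.edge_injective hqq' with
    h | ⟨p, p', rfl, rfl, hm, hu⟩
  · exact absurd h hne
  rw [disjoint_left, image_splitPar_inr_Ioo, image_splitPar_inr_Ioo, ← hm]
  rintro _ ⟨s, hs, rfl⟩ ⟨s', hs', hss'⟩
  obtain rfl : s' = s :=
    Δ.par_inj _ (L.uIcc_endParam_param_subset _ _ _ (uIoo_subset_uIcc_self hs'))
      (L.uIcc_endParam_param_subset _ _ _ (uIoo_subset_uIcc_self hs)) hss'
  exact disjoint_left.1 (disjoint_uIoo_uIoo (L.param_mem_uIoo p.2 (hm ▸ p'.2) hu)) hs hs'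

lemma inl_mem_ends_of_vpos_mem {q : (G.multiCross l L.edge).E} {v : G.V}
    (h : Δ.vpos v ∈ L.splitPar q '' Icc 0 1) : .inl v ∈ (G.multiCross l L.edge).ends q := by
  rcases q with g | p
  · exact Sym2.mem_map.mpr ⟨v, Δ.vertex_on_arc g.val v h, rfl⟩
  have hv : v ∈ G.ends (L.edge p.val.1) := Δ.vertex_on_arc _ v (L.image_splitPar_Icc_subset _ h)
  obtain rfl : v = p.val.2 := by
    by_contra hvu
    rw [image_splitPar_inr_Icc] at h
    obtain ⟨s, hs, hsv⟩ := h
    obtain rfl : s = Δ.endParam _ v := Δ.par_inj _ (L.uIcc_endParam_param_subset _ _ _ hs)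
      (Δ.endParam_mem_Icc _ _) (hsv.trans (par_endParam hv).symm)
    exact notMem_uIcc_of_mem_uIoo (L.param_mem_uIoo p.2 hv (Ne.symm hvu)) hs
  exact Sym2.mem_mk_left _ _

lemma inr_mem_ends_of_pt_mem {q : (G.multiCross l L.edge).E} {i : Fin l}
    (h : L.pt i ∈ L.splitPar q '' Icc 0 1) : .inr i ∈ (G.multiCross l L.edge).ends q := by
  rcases q with g | p
  · have h₀ := L.pt_mem_arc (finEven i)
    have h₁ := L.pt_mem_arc (finOdd i)
    rw [finHalf_finEven] at h₀
    rw [finHalf_finOdd] at h₁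
    rcases Δ.at_most_two _ (L.pt_notMem_range_vpos i) g.val _ _ h h₀ h₁ with h | h | h
    · exact absurd h (g.2 _)
    · exact absurd h (g.2 _)
    · exact absurd (L.edge_injective h) (finEven_ne_finOdd i)
  · rw [L.eq_of_pt_mem_arc _ _ _ (L.image_splitPar_Icc_subset _ h) (L.pt_mem_arc p.val.1)]
    exact Sym2.mem_mk_right _ _

noncomputable def drawing : Drawing (G.multiCross l L.edge) where
  vpos := Sum.elim Δ.vpos L.pt
  par := L.splitPar
  par_cont := by
    rintro (g | p)
    · exact Δ.par_cont _
    · exact Curve.continuousOn_subarc (Δ.par_cont _) (Δ.endParam_mem_Icc _ _)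
        (Ioo_subset_Icc_self (L.param_mem_Ioo _))
  par_inj := by
    rintro (g | p)
    · exact Δ.par_inj _
    · exact Curve.injOn_subarc (Δ.par_inj _) (Δ.endParam_mem_Icc _ _)
        (Ioo_subset_Icc_self (L.param_mem_Ioo _)) (L.endParam_ne_param _ _ _)
  ends_match := by
    rintro (g | p)
    · obtain ⟨v, w, hvw, h₀, h₁⟩ := Δ.ends_match g.val
      exact ⟨.inl v, .inl w, congrArg (Sym2.map Sum.inl) hvw, h₀, h₁⟩
    · exact ⟨.inl p.val.2, .inr (finHalf p.val.1), rfl,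
        (Curve.subarc_zero _ _ _).trans (par_endParam p.2),
        (Curve.subarc_one _ _ _).trans (L.par_param _)⟩
  vpos_inj := Δ.vpos_inj.sumElim L.pt_injective fun v i h => L.pt_notMem_range_vpos i ⟨v, h⟩
  arcs_inter q q' hne := by
    by_cases hqq' : parentEdge L.edge q = parentEdge L.edge q'
    · exact (L.disjoint_image_splitPar_Ioo hqq' hne).inter_eq ▸ subsingleton_empty
    · exact (Δ.arcs_inter _ _ hqq').anti
        (inter_subset_inter (L.image_splitPar_Ioo_subset q) (L.image_splitPar_Ioo_subset q'))
  vertex_on_arc := by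
    rintro q (v | i) h
    · exact L.inl_mem_ends_of_vpos_mem h
    · exact L.inr_mem_ends_of_pt_mem h
  at_most_two y hy q₁ q₂ q₃ h₁ h₂ h₃ := by
    have hyx : y ∉ range L.pt := fun ⟨i, hi⟩ => hy ⟨.inr i, hi⟩
    rcases Δ.at_most_two y (fun ⟨v, hv⟩ => hy ⟨.inl v, hv⟩) _ _ _
      (L.image_splitPar_Icc_subset q₁ h₁) (L.image_splitPar_Icc_subset q₂ h₂)
      (L.image_splitPar_Icc_subset q₃ h₃) with h | h | h
    · exact Or.inl (L.eq_of_mem_image_splitPar h h₁ h₂ hyx)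
    · exact Or.inr (Or.inl (L.eq_of_mem_image_splitPar h h₁ h₃ hyx))
    · exact Or.inr (Or.inr (L.eq_of_mem_image_splitPar h h₂ h₃ hyx))

lemma crossings_drawing : L.drawing.crossings = ∅ := by
  refine eq_empty_of_forall_notMem ?_
  rintro y ⟨hy, q, q', hne, hq, hq'⟩
  have hyx : y ∉ range L.pt := fun ⟨i, hi⟩ => hy ⟨.inr i, hi⟩
  by_cases hqq' : parentEdge L.edge q = parentEdge L.edge q'
  · exact hne (L.eq_of_mem_image_splitPar hqq' hq hq' hyx)
  · exact hyx (L.mem_range_pt y ⟨fun ⟨v, hv⟩ => hy ⟨.inl v, hv⟩, _, _, hqq',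
      L.image_splitPar_Icc_subset q hq, L.image_splitPar_Icc_subset q' hq'⟩)

end Drawing.CrossingLabelling

namespace Drawing

open Multigraph

variable {G : Multigraph} {l : ℕ} {e : Fin (2 * l) → G.E} (Δ : Drawing (G.multiCross l e))

noncomputable def uncrossPar (g : G.E) : ℝ → ℝ × ℝ :=
  open Classical in
  if h : ∃ m, e m = g then
    Δ.joinPar
      (halfEdge e h.choose _ (by rw [h.choose_spec]; exact sym2_out_fst_mem (G.ends g)))
      (halfEdge e h.choose _ (by rw [h.choose_spec]; exact sym2_out_snd_mem (G.ends g)))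
      (.inl (Quot.out (G.ends g)).1) (.inr (finHalf h.choose)) (.inl (Quot.out (G.ends g)).2)
  else Δ.par (.inl ⟨g, fun i hi => h ⟨i, hi.symm⟩⟩)

variable {Δ}

lemma uncrossPar_of_not_exists {g : G.E} (h : ¬∃ m, e m = g) :
    Δ.uncrossPar g = Δ.par (.inl ⟨g, fun i hi => h ⟨i, hi.symm⟩⟩) := by
  rw [uncrossPar, dif_neg h]

lemma exists_uncrossPar_eq_joinPar {g : G.E} (h : ∃ m, e m = g) :
    ∃ (m : Fin (2 * l)) (qA qB : (G.multiCross l e).E),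
      parentEdge e qA = g ∧ parentEdge e qB = g ∧
      (G.multiCross l e).ends qA = s(.inl (Quot.out (G.ends g)).1, .inr (finHalf m)) ∧
      (G.multiCross l e).ends qB = s(.inr (finHalf m), .inl (Quot.out (G.ends g)).2) ∧
      Δ.uncrossPar g = Δ.joinPar qA qB (.inl (Quot.out (G.ends g)).1) (.inr (finHalf m))
        (.inl (Quot.out (G.ends g)).2) := by
  exact ⟨h.choose,
    halfEdge e h.choose _ (by rw [h.choose_spec]; exact sym2_out_fst_mem _),
    halfEdge e h.choose _ (by rw [h.choose_spec]; exact sym2_out_snd_mem _),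
    h.choose_spec, h.choose_spec, rfl, Sym2.eq_swap, by rw [uncrossPar, dif_pos h]⟩

lemma continuousOn_uncrossPar (g : G.E) : ContinuousOn (Δ.uncrossPar g) (Icc 0 1) := by
  by_cases h : ∃ m, e m = g
  · obtain ⟨m, qA, qB, -, -, hA, hB, hpar⟩ := exists_uncrossPar_eq_joinPar (Δ := Δ) h
    exact hpar ▸ continuousOn_joinPar hA hB
  · exact uncrossPar_of_not_exists h ▸ Δ.par_cont _

lemma injOn_uncrossPar (hpl : Δ.crossings = ∅) (g : G.E) :
    InjOn (Δ.uncrossPar g) (Icc 0 1) := by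
  by_cases h : ∃ m, e m = g
  · obtain ⟨m, qA, qB, -, -, hA, hB, hpar⟩ := exists_uncrossPar_eq_joinPar (Δ := Δ) h
    exact hpar ▸ injOn_joinPar hA hB hpl
      fun hαβ => sym2_out_ne _ (G.loopless g) (Sum.inl_injective hαβ)
  · exact uncrossPar_of_not_exists h ▸ Δ.par_inj _

lemma exists_uncrossPar_ends (g : G.E) : ∃ v w, G.ends g = s(v, w) ∧
    Δ.uncrossPar g 0 = Δ.vpos (.inl v) ∧ Δ.uncrossPar g 1 = Δ.vpos (.inl w) := by
  by_cases h : ∃ m, e m = g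
  · obtain ⟨m, qA, qB, -, -, hA, hB, hpar⟩ := exists_uncrossPar_eq_joinPar (Δ := Δ) h
    exact ⟨_, _, sym2_out_eq _, hpar ▸ joinPar_zero hA, hpar ▸ joinPar_one hB⟩
  · obtain ⟨v, w, hvw, h₀, h₁⟩ :=
      Δ.ends_match (.inl ⟨g, fun i hi => h ⟨i, hi.symm⟩⟩)
    have hvw' : Sym2.map Sum.inl (G.ends g) = s(v, w) := hvw
    obtain ⟨v, -, rfl⟩ := Sym2.mem_map.mp (hvw' ▸ Sym2.mem_mk_left _ _)
    obtain ⟨w, -, rfl⟩ := Sym2.mem_map.mp (hvw' ▸ Sym2.mem_mk_right _ _)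
    rw [uncrossPar_of_not_exists h]
    exact ⟨v, w, Sym2.map.injective Sum.inl_injective hvw', h₀, h₁⟩

lemma exists_mem_arc_of_mem_image_uncrossPar {g : G.E} {y : ℝ × ℝ}
    (hy : y ∈ Δ.uncrossPar g '' Icc 0 1) : ∃ q, parentEdge e q = g ∧ y ∈ Δ.arc q := by
  by_cases h : ∃ m, e m = g
  · obtain ⟨m, qA, qB, hqA, hqB, hA, hB, hpar⟩ := exists_uncrossPar_eq_joinPar (Δ := Δ) h
    rw [hpar, image_joinPar_Icc hA hB] at hy
    rcases hy with hy | hy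
    · exact ⟨qA, hqA, hy⟩
    · exact ⟨qB, hqB, hy⟩
  · rw [uncrossPar_of_not_exists h] at hy
    exact ⟨_, rfl, hy⟩

lemma mem_image_uncrossPar_Ioo {g : G.E} {y : ℝ × ℝ} (hy : y ∈ Δ.uncrossPar g '' Ioo 0 1) :
    (∃ q, parentEdge e q = g ∧ y ∈ Δ.par q '' Ioo 0 1) ∨ ∃ i, Δ.vpos (.inr i) = y := by
  by_cases h : ∃ m, e m = g
  · obtain ⟨m, qA, qB, hqA, hqB, hA, hB, hpar⟩ := exists_uncrossPar_eq_joinPar (Δ := Δ) h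
    rw [hpar, image_joinPar_Ioo hA hB] at hy
    rcases hy with (hy | rfl) | hy
    · exact Or.inl ⟨qA, hqA, hy⟩
    · exact Or.inr ⟨_, rfl⟩
    · exact Or.inl ⟨qB, hqB, hy⟩
  · rw [uncrossPar_of_not_exists h] at hy
    exact Or.inl ⟨_, rfl, hy⟩

/-- A crossed edge passes through one new vertex, an uncrossed one through none. -/
lemma eq_of_vpos_inr_mem_image_uncrossPar {g : G.E} {i j : Fin l}
    (hi : Δ.vpos (.inr i) ∈ Δ.uncrossPar g '' Icc 0 1)
    (hj : Δ.vpos (.inr j) ∈ Δ.uncrossPar g '' Icc 0 1) : i = j := by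
  by_cases h : ∃ m, e m = g
  · obtain ⟨m, qA, qB, -, -, hA, hB, hpar⟩ := exists_uncrossPar_eq_joinPar (Δ := Δ) h
    have key : ∀ k, Δ.vpos (.inr k) ∈ Δ.uncrossPar g '' Icc 0 1 → k = finHalf m := by
      intro k hk
      rw [hpar, image_joinPar_Icc hA hB] at hk
      rcases hk with hk | hk
      · rcases Sym2.mem_iff.mp (hA ▸ Δ.vertex_on_arc _ _ hk) with hk' | hk'
        · exact absurd hk'.symm Sum.inl_ne_inr
        · exact Sum.inr_injective hk'
      · rcases Sym2.mem_iff.mp (hB ▸ Δ.vertex_on_arc _ _ hk) with hk' | hk'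
        · exact Sum.inr_injective hk'
        · exact absurd hk' Sum.inr_ne_inl
    rw [key i hi, key j hj]
  · rw [uncrossPar_of_not_exists h] at hi
    obtain ⟨m, -, hm⟩ := exists_parentEdge_eq_of_inr_mem_ends (Δ.vertex_on_arc _ _ hi)
    exact absurd ⟨m, hm.symm⟩ h

/-- By planarity, a common interior point of two redrawn edges must be a new vertex, and each
edge passes through at most one. -/
lemma subsingleton_image_uncrossPar_Ioo_inter (hpl : Δ.crossings = ∅) {g g' : G.E}
    (hne : g ≠ g') :
    (Δ.uncrossPar g '' Ioo 0 1 ∩ Δ.uncrossPar g' '' Ioo 0 1).Subsingleton := by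
  have new_vertex : ∀ y ∈ Δ.uncrossPar g '' Ioo 0 1 ∩ Δ.uncrossPar g' '' Ioo 0 1,
      ∃ i, Δ.vpos (.inr i) = y := by
    rintro y ⟨hy, hy'⟩
    refine (mem_image_uncrossPar_Ioo hy).resolve_left ?_
    rintro ⟨q, rfl, hq⟩
    rcases mem_image_uncrossPar_Ioo hy' with ⟨q', rfl, hq'⟩ | ⟨i, rfl⟩
    · exact disjoint_left.1 (disjoint_image_Ioo_arc_of_crossings_eq_empty hpl
        (ne_of_apply_ne _ hne)) hq (image_mono Ioo_subset_Icc_self hq')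
    · exact Δ.vpos_notMem_image_Ioo _ q hq
  intro y hy y' hy'
  obtain ⟨i, rfl⟩ := new_vertex y hy
  obtain ⟨j, rfl⟩ := new_vertex y' hy'
  rw [eq_of_vpos_inr_mem_image_uncrossPar (image_mono Ioo_subset_Icc_self hy.1)
    (image_mono Ioo_subset_Icc_self hy'.1)]

lemma uncrossPar_at_most_two {y : ℝ × ℝ} (hy : y ∉ range fun v => Δ.vpos (.inl v))
    {g₁ g₂ g₃ : G.E} (h₁ : y ∈ Δ.uncrossPar g₁ '' Icc 0 1)
    (h₂ : y ∈ Δ.uncrossPar g₂ '' Icc 0 1) (h₃ : y ∈ Δ.uncrossPar g₃ '' Icc 0 1) :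
    g₁ = g₂ ∨ g₁ = g₃ ∨ g₂ = g₃ := by
  obtain ⟨q₁, rfl, hq₁⟩ := exists_mem_arc_of_mem_image_uncrossPar h₁
  obtain ⟨q₂, rfl, hq₂⟩ := exists_mem_arc_of_mem_image_uncrossPar h₂
  obtain ⟨q₃, rfl, hq₃⟩ := exists_mem_arc_of_mem_image_uncrossPar h₃
  by_cases hyv : y ∈ range Δ.vpos
  · obtain ⟨v | i, rfl⟩ := hyv
    · exact absurd ⟨v, rfl⟩ hy
    obtain ⟨m₁, hm₁, he₁⟩ :=
      exists_parentEdge_eq_of_inr_mem_ends (Δ.vertex_on_arc _ _ hq₁)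
    obtain ⟨m₂, hm₂, he₂⟩ :=
      exists_parentEdge_eq_of_inr_mem_ends (Δ.vertex_on_arc _ _ hq₂)
    obtain ⟨m₃, hm₃, he₃⟩ :=
      exists_parentEdge_eq_of_inr_mem_ends (Δ.vertex_on_arc _ _ hq₃)
    rw [he₁, he₂, he₃]
    rcases eq_of_finHalf_eq_finHalf (hm₁.trans hm₂.symm) (hm₁.trans hm₃.symm) with
      h | h | h <;> simp [h]
  · rcases Δ.at_most_two y hyv q₁ q₂ q₃ hq₁ hq₂ hq₃ with h | h | h <;> simp [h]

noncomputable def uncross (Δ : Drawing (G.multiCross l e)) (hpl : Δ.crossings = ∅) :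
    Drawing G where
  vpos v := Δ.vpos (.inl v)
  par := Δ.uncrossPar
  par_cont := continuousOn_uncrossPar
  par_inj := injOn_uncrossPar hpl
  ends_match := exists_uncrossPar_ends
  vpos_inj _ _ h := Sum.inl_injective (Δ.vpos_inj h)
  arcs_inter _ _ hne := subsingleton_image_uncrossPar_Ioo_inter hpl hne
  vertex_on_arc g v h := by
    obtain ⟨q, rfl, hq⟩ := exists_mem_arc_of_mem_image_uncrossPar h
    exact mem_ends_parentEdge (Δ.vertex_on_arc q _ hq)
  at_most_two _ hy _ _ _ := uncrossPar_at_most_two hy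

lemma crossings_uncross_subset (hpl : Δ.crossings = ∅) :
    (Δ.uncross hpl).crossings ⊆ range fun i => Δ.vpos (.inr i) := by
  rintro y ⟨hy, g, g', hne, hyg, hyg'⟩
  obtain ⟨q, rfl, hq⟩ := exists_mem_arc_of_mem_image_uncrossPar hyg
  obtain ⟨q', rfl, hq'⟩ := exists_mem_arc_of_mem_image_uncrossPar hyg'
  obtain ⟨v | i, rfl, -⟩ :=
    exists_vpos_eq_of_crossings_eq_empty hpl (ne_of_apply_ne _ hne) hq hq'
  · exact absurd ⟨v, rfl⟩ hy
  · exact ⟨i, rfl⟩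

lemma crossingsAtMost_uncross (hpl : Δ.crossings = ∅) : (Δ.uncross hpl).CrossingsAtMost l := by
  refine ⟨(finite_range _).subset (crossings_uncross_subset hpl),
    (ncard_le_ncard (crossings_uncross_subset hpl) (finite_range _)).trans_eq ?_⟩
  rw [ncard_range_of_injective fun i j h => Sum.inr_injective (Δ.vpos_inj h), Nat.card_fin]

lemma subsingleton_crossings_uncross_arc (hpl : Δ.crossings = ∅) (g : G.E) :
    {x | (Δ.uncross hpl).IsCrossing x ∧ x ∈ (Δ.uncross hpl).arc g}.Subsingleton := by
  rintro _ ⟨hy, hyg⟩ _ ⟨hy', hyg'⟩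
  obtain ⟨i, rfl⟩ := crossings_uncross_subset hpl hy
  obtain ⟨j, rfl⟩ := crossings_uncross_subset hpl hy'
  rw [eq_of_vpos_inr_mem_image_uncrossPar hyg hyg']

end Drawing

/-- For `k ≥ 0`: there are an `l ≤ k` and pairwise distinct edges
`e 0, …, e (2l - 1)` of `G` such that the graph `G^{×ē}` obtained by successively
crossing `e 0` with `e 1`, …, `e (2l-2)` with `e (2l-1)` is planar iff `G` has a
drawing with at most `k` crossings in which every edge is involved in at most one
crossing. -/
theorem multiCross_planar_iff_drawing (k : ℕ) (G : Multigraph) :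
    (∃ l : ℕ, l ≤ k ∧ ∃ e : Fin (2 * l) → G.E,
      Function.Injective e ∧ (G.multiCross l e).IsPlanar) ↔
    ∃ Δ : Drawing G, Δ.CrossingsAtMost k ∧
      ∀ e : G.E, {x | Δ.IsCrossing x ∧ x ∈ Δ.arc e}.Subsingleton := by
  constructor
  · rintro ⟨l, hlk, e, -, Δ, hpl⟩
    obtain ⟨hfin, hcard⟩ := Δ.crossingsAtMost_uncross hpl
    exact ⟨Δ.uncross hpl, ⟨hfin, hcard.trans hlk⟩,
      Δ.subsingleton_crossings_uncross_arc hpl⟩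
  · rintro ⟨Δ, hk, hsub⟩
    obtain ⟨l, hlk, ⟨L⟩⟩ := Δ.exists_crossingLabelling hk hsub
    exact ⟨l, hlk, L.edge, L.edge_injective, L.drawing, L.crossings_drawing⟩
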